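/- arXiv:1405.2161 — 2 statements merged into one kernel-verified Lean document; each statement's English description precedes it below -/
import Mathlib

section
/- Let L be a Lie algebra over K (containing ℚ), M a K-module, σ : L → End_K(M) a Lie algebra homomorphism (σ([a,b]) = σ(a)σ(b) - σ(b)σ(a)), and τ an involution of L with τ([a,b]) = -[τ(a),τ(b)]. Define the map σ̃ : L → End_K(M) by σ̃(y) = σ(θ(y)) where θ = (1/2)(id - τ). Then for all a, b ∈ L: σ̃(a)σ̃(b) - σ̃(b)σ̃(a) = σ̃([θ(a), b]) = σ̃([a, θ(b)]) = σ̃([θ(a), θ(b)]). -/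
/-- for a Lie representation σ and σ̃ = σ ∘ θ,
σ̃(a)σ̃(b) - σ̃(b)σ̃(a) = σ̃([θa,b]) = σ̃([a,θb]) = σ̃([θa,θb]). -/
theorem twisted_action_bracket {K L M : Type*} [CommRing K] [Algebra ℚ K]
    [LieRing L] [LieAlgebra K L] [AddCommGroup M] [Module K M]
    (σ : L →ₗ[K] Module.End K M)
    (hrep : ∀ a b : L, σ ⁅a, b⁆ = σ a * σ b - σ b * σ a)
    (τ : L →ₗ[K] L) (hinv : ∀ x, τ (τ x) = x)
    (hbr : ∀ a b : L, τ ⁅a, b⁆ = -⁅τ a, τ b⁆)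
    (θ : L → L) (hθ : ∀ x, θ x = (algebraMap ℚ K (1/2)) • (x - τ x))
    (σt : L → Module.End K M) (hσt : ∀ y, σt y = σ (θ y)) :
    ∀ a b : L,
      σt a * σt b - σt b * σt a = σt ⁅θ a, b⁆ ∧
      σt ⁅θ a, b⁆ = σt ⁅a, θ b⁆ ∧
      σt ⁅a, θ b⁆ = σt ⁅θ a, θ b⁆ := by
  intro a b
  set c : K := algebraMap ℚ K (1/2) with hc
  have h2 : c + c = 1 := by rw [← map_add]; norm_num
  -- τ(θ x) = - θ x
  have hτθ : ∀ x, τ (θ x) = -θ x := by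
    intro x
    simp [hθ, map_smul, map_sub, hinv, smul_sub]
  -- θ is idempotent
  have hθθ : ∀ x, θ (θ x) = θ x := by
    intro x
    rw [hθ (θ x), hτθ, sub_neg_eq_add, ← two_smul K, smul_smul]
    rw [show c * 2 = c + c by ring, h2, one_smul]
  have key1 : θ ⁅θ a, b⁆ = ⁅θ a, θ b⁆ := by
    rw [hθ ⁅θ a, b⁆, hbr, hτθ, neg_lie, neg_neg, hθ b, lie_smul, smul_sub, lie_sub, smul_sub]
  have key2 : θ ⁅a, θ b⁆ = ⁅θ a, θ b⁆ := by
    rw [hθ ⁅a, θ b⁆, hbr, hτθ, lie_neg, neg_neg, hθ a, smul_lie, smul_sub]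
    rw [sub_lie, smul_sub]
  have key3 : θ ⁅θ a, θ b⁆ = ⁅θ a, θ b⁆ := by
    rw [hθ ⁅θ a, θ b⁆, hbr, hτθ, hτθ, neg_lie, lie_neg, neg_neg, sub_neg_eq_add,
      ← two_smul K, smul_smul, show c * 2 = c + c by ring, h2, one_smul]
  refine ⟨?_, ?_, ?_⟩
  · rw [hσt, hσt, hσt, key1, ← hrep]
  · rw [hσt, hσt, key1, key2]
  · rw [hσt, hσt, key2, key3]
end

section
/- Let G be a free group of finite rank and K a commutative ring containing ℚ. Then the intersection ⋂_{j≥0} I^j G of all powers of the augmentation ideal of the group ring KG is zero. -/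
noncomputable section AugAux

open Finset

/-- Generalized binomial coefficient. -/
def bq (e : ℤ) (a : ℕ) : ℚ := (∏ j ∈ Finset.range a, ((e : ℚ) - j)) / (a.factorial : ℚ)

lemma bq_zero (e : ℤ) : bq e 0 = 1 := by simp [bq]

lemma bq_pascal (e : ℤ) (a : ℕ) : bq (e + 1) (a + 1) = bq e (a + 1) + bq e a := by
  have hprod : (∏ j ∈ Finset.range (a + 1), (((e : ℚ) + 1) - j))
      = (∏ j ∈ Finset.range a, ((e : ℚ) - j)) * ((e : ℚ) + 1) := by
    rw [Finset.prod_range_succ']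
    congr 1
    · exact Finset.prod_congr rfl fun j _ => by push_cast; ring
    · norm_num
  have hfac : ((a + 1).factorial : ℚ) = (a + 1) * (a.factorial : ℚ) := by
    rw [Nat.factorial_succ]; push_cast; ring
  have hfa : (a.factorial : ℚ) ≠ 0 := by exact_mod_cast a.factorial_ne_zero
  have hfa1 : ((a : ℚ) + 1) ≠ 0 := by positivity
  unfold bq
  rw [Finset.prod_range_succ (fun j => ((e : ℚ) - j)), hfac]
  push_cast [hprod]
  field_simp
  ring

lemma bq_zero_exp (a : ℕ) : bq 0 (a + 1) = 0 := by
  unfold bq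
  rw [Finset.prod_range_succ']
  simp

variable (K : Type*) [CommRing K] [Algebra ℚ K]

/-- `(1+X)^e` as a power series over `K`. -/
def sQ (e : ℤ) : PowerSeries K := PowerSeries.mk fun a => algebraMap ℚ K (bq e a)

lemma sQ_coeff (e : ℤ) (a : ℕ) : PowerSeries.coeff a (sQ K e) = algebraMap ℚ K (bq e a) :=
  PowerSeries.coeff_mk _ _

lemma sQ_zero : sQ K 0 = 1 := by
  apply PowerSeries.ext; intro a
  cases a with
  | zero => simp [sQ_coeff, bq_zero]
  | succ a => simp [sQ_coeff, bq_zero_exp]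

lemma sQ_succ (e : ℤ) : sQ K e * (1 + PowerSeries.X) = sQ K (e + 1) := by
  apply PowerSeries.ext; intro a
  rw [mul_add, mul_one, map_add]
  cases a with
  | zero =>
      rw [PowerSeries.coeff_zero_mul_X, sQ_coeff, sQ_coeff, bq_zero, bq_zero, add_zero]
  | succ a =>
      rw [PowerSeries.coeff_succ_mul_X, sQ_coeff, sQ_coeff, sQ_coeff, bq_pascal, map_add]

lemma sQ_add_nat (e : ℤ) (m : ℕ) :
    sQ K (e + m) = sQ K e * (1 + PowerSeries.X) ^ m := by
  induction m with
  | zero => simp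
  | succ m ih =>
      have : (e + (m + 1 : ℕ) : ℤ) = (e + m) + 1 := by push_cast; ring
      rw [this, ← sQ_succ, ih, pow_succ, mul_assoc]

lemma sQ_nat (m : ℕ) : sQ K (m : ℤ) = (1 + PowerSeries.X) ^ m := by
  have := sQ_add_nat K 0 m
  rw [zero_add, sQ_zero, one_mul] at this
  exact this

lemma oneD (T : Finset ℤ) (hT : (0 : ℤ) ∉ T) (d : ℤ → K)
    (h : ∀ a : ℕ, 1 ≤ a → ∑ v ∈ T, d v * algebraMap ℚ K (bq v a) = 0) :
    ∀ v ∈ T, d v = 0 := by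
  classical
  set m : ℕ := T.sup fun v => v.natAbs with hm
  have hmv : ∀ v ∈ T, 0 ≤ v + m := by
    intro v hv
    have h1 : v.natAbs ≤ m := Finset.le_sup (f := fun v => v.natAbs) hv
    have h2 : ((v.natAbs : ℤ)) ≤ (m : ℤ) := by exact_mod_cast h1
    omega
  set A : ℤ → ℕ := fun v => (v + m).toNat with hA
  have hAinj : ∀ v ∈ T, ∀ v' ∈ T, A v = A v' → v = v' := by
    intro v hv v' hv' hA'
    have := congrArg (fun k : ℕ => (k : ℤ)) hA'
    simp only [A, Int.toNat_of_nonneg (hmv v hv), Int.toNat_of_nonneg (hmv v' hv')] at this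
    omega
  set γ : K := ∑ v ∈ T, d v with hγ
  set F : PowerSeries K := ∑ v ∈ T, PowerSeries.C (d v) * sQ K v with hF
  have hFC : F = PowerSeries.C γ := by
    apply PowerSeries.ext; intro a
    rw [hF, map_sum]
    cases a with
    | zero =>
        have hterm : ∀ v ∈ T, (PowerSeries.coeff 0) (PowerSeries.C (d v) * sQ K v) = d v := by
          intro v hv
          rw [PowerSeries.coeff_C_mul, sQ_coeff, bq_zero, map_one, mul_one]
        rw [Finset.sum_congr rfl hterm, PowerSeries.coeff_zero_C]
    | succ a =>
        have hz : ∑ v ∈ T, (PowerSeries.coeff (a+1)) (PowerSeries.C (d v) * sQ K v) = 0 := by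
          have : ∀ v ∈ T, (PowerSeries.coeff (a+1)) (PowerSeries.C (d v) * sQ K v)
              = d v * algebraMap ℚ K (bq v (a+1)) := by
            intro v hv
            rw [PowerSeries.coeff_C_mul, sQ_coeff]
          rw [Finset.sum_congr rfl this]
          exact h (a+1) (Nat.succ_le_succ (Nat.zero_le a))
        rw [hz, PowerSeries.coeff_C]
        simp
  have key : (∑ v ∈ T, PowerSeries.C (d v) * (1 + PowerSeries.X) ^ (A v))
      = PowerSeries.C γ * (1 + PowerSeries.X) ^ m := by
    have h1 : ∀ v ∈ T, PowerSeries.C (d v) * (1 + PowerSeries.X) ^ (A v)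
        = PowerSeries.C (d v) * sQ K v * (1 + PowerSeries.X) ^ m := by
      intro v hv
      rw [mul_assoc, ← sQ_add_nat]
      congr 2
      rw [← sQ_nat]
      congr 1
      simp [A, Int.toNat_of_nonneg (hmv v hv)]
    rw [Finset.sum_congr rfl h1, ← Finset.sum_mul, ← hF, hFC]
  -- move to polynomials
  set Q : Polynomial K := (∑ v ∈ T, Polynomial.C (d v) * (1 + Polynomial.X) ^ (A v))
      - Polynomial.C γ * (1 + Polynomial.X) ^ m with hQdef
  have hQcoe : Polynomial.coeToPowerSeries.ringHom Q = 0 := by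
    rw [hQdef, map_sub, map_sum]
    have hterm : ∀ v ∈ T, Polynomial.coeToPowerSeries.ringHom
        (Polynomial.C (d v) * (1 + Polynomial.X) ^ A v)
        = PowerSeries.C (d v) * (1 + PowerSeries.X) ^ A v := by
      intro v hv
      rw [map_mul, map_pow, map_add, map_one, Polynomial.coeToPowerSeries.ringHom_apply,
        Polynomial.coeToPowerSeries.ringHom_apply, Polynomial.coe_C, Polynomial.coe_X]
    rw [Finset.sum_congr rfl hterm, map_mul, map_pow, map_add, map_one,
      Polynomial.coeToPowerSeries.ringHom_apply, Polynomial.coeToPowerSeries.ringHom_apply,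
      Polynomial.coe_C, Polynomial.coe_X, key, sub_self]
  have hQ0 : Q = 0 := by
    rw [Polynomial.coeToPowerSeries.ringHom_apply] at hQcoe
    exact_mod_cast hQcoe
  have haev := congrArg (Polynomial.aeval (Polynomial.X - Polynomial.C (1:K))) hQ0
  rw [map_sub, map_sum, map_zero, map_mul] at haev
  have hax : (Polynomial.aeval (Polynomial.X - Polynomial.C (1:K)))
      ((1 + Polynomial.X : Polynomial K)) = Polynomial.X := by
    rw [map_add, map_one, Polynomial.aeval_X, Polynomial.C_1]
    ring
  have haev' : (∑ v ∈ T, Polynomial.C (d v) * Polynomial.X ^ (A v))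
      - Polynomial.C γ * Polynomial.X ^ m = 0 := by
    have h2 : ∀ v ∈ T, (Polynomial.aeval (Polynomial.X - Polynomial.C (1:K)))
        (Polynomial.C (d v) * (1 + Polynomial.X) ^ (A v))
        = Polynomial.C (d v) * Polynomial.X ^ (A v) := by
      intro v hv
      rw [map_mul, map_pow, hax, Polynomial.aeval_C, Polynomial.algebraMap_eq]
    rw [Finset.sum_congr rfl h2] at haev
    rw [map_pow, hax, Polynomial.aeval_C, Polynomial.algebraMap_eq] at haev
    exact haev
  intro v₀ hv₀
  have hcoeff := congrArg (fun p : Polynomial K => p.coeff (A v₀)) haev'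
  simp only [Polynomial.coeff_sub, Polynomial.finset_sum_coeff, Polynomial.coeff_C_mul,
    Polynomial.coeff_X_pow, Polynomial.coeff_zero] at hcoeff
  have hsum : ∑ v ∈ T, d v * (if A v₀ = A v then (1:K) else 0) = d v₀ := by
    rw [Finset.sum_eq_single v₀]
    · simp
    · intro v hv hne
      have : A v₀ ≠ A v := fun hh => hne (hAinj v hv v₀ hv₀ hh.symm)
      simp [this]
    · intro hv; exact absurd hv₀ hv
  have hm0 : ¬ (A v₀ = m) := by
    intro hh
    have := congrArg (fun k : ℕ => (k : ℤ)) hh.symm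
    simp only [A, Int.toNat_of_nonneg (hmv v₀ hv₀)] at this
    have hz : v₀ = 0 := by omega
    exact hT (hz ▸ hv₀)
  rw [hsum] at hcoeff
  simp only [hm0, if_false, mul_zero, sub_zero] at hcoeff
  exact hcoeff


lemma multiD : ∀ (k : ℕ) (T : Finset (List ℤ)), (∀ v ∈ T, v.length = k) →
    (∀ v ∈ T, ∀ x ∈ v, x ≠ (0:ℤ)) → ∀ (d : List ℤ → K),
    (∀ a : List ℕ, a.length = k → (∀ x ∈ a, 1 ≤ x) →
      ∑ v ∈ T, d v * ((v.zip a).map fun p => algebraMap ℚ K (bq p.1 p.2)).prod = 0) →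
    ∀ v ∈ T, d v = 0 := by
  classical
  intro k
  induction k with
  | zero =>
      intro T hlen _ d hrel v hv
      have hvnil : v = [] := List.eq_nil_of_length_eq_zero (hlen v hv)
      have hsub : T ⊆ {([] : List ℤ)} := by
        intro w hw
        simp [List.eq_nil_of_length_eq_zero (hlen w hw)]
      have hrel0 := hrel [] rfl (by simp)
      have hTe : T = {([] : List ℤ)} := by
        apply Finset.Subset.antisymm hsub
        intro w hw
        simp only [Finset.mem_singleton] at hw
        rw [hw, ← hvnil]; exact hv
      rw [hTe] at hrel0
      simpa [hvnil] using hrel0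
  | succ k ih =>
      intro T hlen hnz d hrel v hv
      set H : Finset ℤ := T.image (fun w => w.headI) with hH
      have hne : ∀ w ∈ T, w ≠ [] := by
        intro w hw hcon
        have := hlen w hw
        rw [hcon] at this
        simp at this
      have hcons : ∀ w ∈ T, w.headI :: w.tail = w := by
        intro w hw
        cases hw2 : w with
        | nil => exact absurd hw2 (hne w hw)
        | cons x t => simp
      have hH0 : (0:ℤ) ∉ H := by
        simp only [hH, Finset.mem_image]
        rintro ⟨w, hw, hwh⟩
        refine hnz w hw w.headI ?_ hwh
        rw [← hcons w hw]
        exact List.mem_cons_self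
      have step1 : ∀ a' : List ℕ, a'.length = k → (∀ x ∈ a', 1 ≤ x) → ∀ z ∈ H,
          ∑ w ∈ T.filter (fun w => w.headI = z),
            d w * ((w.tail.zip a').map fun p => algebraMap ℚ K (bq p.1 p.2)).prod = 0 := by
        intro a' hlen' hpos'
        refine oneD K H hH0 _ ?_
        intro a₀ ha₀
        have hsplit : ∑ z ∈ H, (∑ w ∈ T.filter (fun w => w.headI = z),
              d w * ((w.tail.zip a').map fun p => algebraMap ℚ K (bq p.1 p.2)).prod)
              * algebraMap ℚ K (bq z a₀)
            = ∑ w ∈ T, d w * ((w.zip (a₀ :: a')).map fun p => algebraMap ℚ K (bq p.1 p.2)).prod := by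
          have h1 : ∀ z ∈ H, (∑ w ∈ T.filter (fun w => w.headI = z),
                d w * ((w.tail.zip a').map fun p => algebraMap ℚ K (bq p.1 p.2)).prod)
                * algebraMap ℚ K (bq z a₀)
              = ∑ w ∈ T.filter (fun w => w.headI = z),
                d w * ((w.zip (a₀ :: a')).map fun p => algebraMap ℚ K (bq p.1 p.2)).prod := by
            intro z hz
            rw [Finset.sum_mul]
            refine Finset.sum_congr rfl ?_
            intro w hw
            have hwT : w ∈ T := (Finset.mem_filter.mp hw).1
            have hwz : w.headI = z := (Finset.mem_filter.mp hw).2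
            have hzipc : w.zip (a₀ :: a') = (w.headI, a₀) :: (w.tail.zip a') := by
              conv_lhs => rw [← hcons w hwT]
              rfl
            rw [hzipc, List.map_cons, List.prod_cons, hwz]
            ring
          rw [Finset.sum_congr rfl h1]
          exact Finset.sum_fiberwise_of_maps_to (fun w hw => Finset.mem_image_of_mem _ hw) _
        rw [hsplit]
        refine hrel (a₀ :: a') (by simp [hlen']) ?_
        intro x hx
        rcases List.mem_cons.mp hx with h | h
        · omega
        · exact hpos' x h
      -- step 2
      have step2 : ∀ z ∈ H, ∀ w ∈ T.filter (fun w => w.headI = z), d w = 0 := by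
        intro z hz w hw
        set Tz := T.filter (fun w => w.headI = z) with hTz
        have hmemTz : ∀ w' ∈ Tz, w' ∈ T ∧ w'.headI = z := by
          intro w' hw'
          exact Finset.mem_filter.mp hw'
        have hconsz : ∀ w' ∈ Tz, z :: w'.tail = w' := by
          intro w' hw'
          rw [← (hmemTz w' hw').2]
          exact hcons w' (hmemTz w' hw').1
        have hinj : ∀ x ∈ Tz, ∀ y ∈ Tz, x.tail = y.tail → x = y := by
          intro x hx y hy hxy
          rw [← hconsz x hx, ← hconsz y hy, hxy]
        have happ := ih (Tz.image List.tail) ?_ ?_ (fun t => d (z :: t)) ?_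
        · have := happ w.tail (Finset.mem_image_of_mem _ hw)
          rwa [hconsz w hw] at this
        · intro t ht
          rcases Finset.mem_image.mp ht with ⟨w', hw', rfl⟩
          have := hlen w' (hmemTz w' hw').1
          rw [← hconsz w' hw'] at this
          simpa using this
        · intro t ht x hx
          rcases Finset.mem_image.mp ht with ⟨w', hw', rfl⟩
          refine hnz w' (hmemTz w' hw').1 x ?_
          rw [← hconsz w' hw']
          exact List.mem_cons_of_mem _ hx
        · intro a' hlen' hpos'
          rw [Finset.sum_image hinj]
          have hterm : ∀ w' ∈ Tz, d (z :: w'.tail)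
              * ((w'.tail.zip a').map fun p => algebraMap ℚ K (bq p.1 p.2)).prod
              = d w' * ((w'.tail.zip a').map fun p => algebraMap ℚ K (bq p.1 p.2)).prod := by
            intro w' hw'
            rw [hconsz w' hw']
          rw [Finset.sum_congr rfl hterm]
          exact step1 a' hlen' hpos' z hz
      refine step2 v.headI (Finset.mem_image_of_mem _ hv) v ?_
      exact Finset.mem_filter.mpr ⟨hv, rfl⟩

section Op

variable (n : ℕ)

/-- prepend-letter operator -/
def Lfun (i : Fin n) (f : List (Fin n) → K) : List (Fin n) → K
  | [] => 0
  | a :: t => if a = i then f t else 0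

def Lop (i : Fin n) : Module.End K (List (Fin n) → K) where
  toFun := Lfun K n i
  map_add' f g := by
    funext w
    cases w with
    | nil => simp [Lfun]
    | cons a t => simp only [Lfun, Pi.add_apply]; split_ifs <;> simp
  map_smul' c f := by
    funext w
    cases w with
    | nil => simp [Lfun]
    | cons a t => simp only [Lfun, Pi.smul_apply, RingHom.id_apply]; split_ifs <;> simp

def Mfun (i : Fin n) (f : List (Fin n) → K) : List (Fin n) → K
  | [] => f []
  | a :: t => f (a :: t) - if a = i then Mfun i f t else 0

def Mop (i : Fin n) : Module.End K (List (Fin n) → K) where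
  toFun := Mfun K n i
  map_add' f g := by
    funext w
    induction w with
    | nil => simp [Mfun]
    | cons a t ih =>
        have ih' : Mfun K n i (f + g) t = Mfun K n i f t + Mfun K n i g t := by
          simpa using ih
        simp only [Mfun, Pi.add_apply, ih']
        split_ifs <;> ring
  map_smul' c f := by
    funext w
    induction w with
    | nil => simp [Mfun]
    | cons a t ih =>
        have ih' : Mfun K n i (c • f) t = c * Mfun K n i f t := by
          simpa using ih
        simp only [Mfun, Pi.smul_apply, RingHom.id_apply, smul_eq_mul, ih']
        split_ifs <;> ring

lemma Mfun_LM (i : Fin n) (f : List (Fin n) → K) :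
    ∀ t, Mfun K n i (f + Lfun K n i f) t = f t := by
  intro t
  induction t with
  | nil => simp [Mfun, Lfun]
  | cons a t ih =>
      simp only [Mfun, Pi.add_apply, Lfun, ih]
      split_ifs <;> ring

lemma LM_eq_one (i : Fin n) :
    ((1 : Module.End K (List (Fin n) → K)) + Lop K n i) * Mop K n i = 1 := by
  apply LinearMap.ext
  intro f
  funext w
  have hl : (((1 : Module.End K (List (Fin n) → K)) + Lop K n i) * Mop K n i) f w
      = Mfun K n i f w + Lfun K n i (Mfun K n i f) w := rfl
  have hr : ((1 : Module.End K (List (Fin n) → K)) : Module.End K (List (Fin n) → K)) f w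
      = f w := rfl
  rw [hl, hr]
  cases w with
  | nil => simp [Mfun, Lfun]
  | cons a t =>
      simp only [Mfun, Lfun]
      split_ifs <;> ring

lemma ML_eq_one (i : Fin n) :
    Mop K n i * ((1 : Module.End K (List (Fin n) → K)) + Lop K n i) = 1 := by
  apply LinearMap.ext
  intro f
  funext w
  have hl : (Mop K n i * ((1 : Module.End K (List (Fin n) → K)) + Lop K n i)) f w
      = Mfun K n i (f + Lfun K n i f) w := rfl
  have hr : ((1 : Module.End K (List (Fin n) → K)) : Module.End K (List (Fin n) → K)) f w
      = f w := rfl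
  rw [hl, hr]
  exact Mfun_LM K n i f w

/-- the invertible operator `1 + L_i` -/
def uE (i : Fin n) : (Module.End K (List (Fin n) → K))ˣ :=
  ⟨(1 : Module.End K (List (Fin n) → K)) + Lop K n i, Mop K n i, LM_eq_one K n i, ML_eq_one K n i⟩

lemma Lpow_apply (i : Fin n) (k : ℕ) (f : List (Fin n) → K) (w : List (Fin n)) :
    ((Lop K n i ^ k) f) w
      = if w.take k = List.replicate k i then f (w.drop k) else 0 := by
  induction k generalizing f w with
  | zero => simp
  | succ k ih =>
      rw [pow_succ']
      have hl : ((Lop K n i * Lop K n i ^ k) f) w = Lfun K n i ((Lop K n i ^ k) f) w := rfl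
      rw [hl]
      cases w with
      | nil =>
          simp only [Lfun, List.take_nil]
          have hne : ([] : List (Fin n)) ≠ List.replicate (k+1) i := by
            intro h
            have := congrArg List.length h
            simp at this
          simp [hne]
      | cons a t =>
          simp only [Lfun, List.take_cons, List.replicate_succ, List.drop_succ_cons]
          rw [ih]
          split_ifs with h1 h2 h3 h3 h2 <;> first
            | rfl
            | (exfalso; simp_all [List.cons_inj_right, List.cons.injEq])

end Op
section Tcsec

variable (n : ℕ)

def Tc (i : Fin n) (e : ℤ) (f : List (Fin n) → K) (w : List (Fin n)) : K :=
  ∑ k ∈ Finset.range (w.length + 1), algebraMap ℚ K (bq e k) * ((Lop K n i ^ k) f) w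

lemma Lpow_top (i : Fin n) (f : List (Fin n) → K) (w : List (Fin n)) :
    ((Lop K n i ^ (w.length + 1)) f) w = 0 := by
  rw [Lpow_apply]
  have h1 : w.take (w.length + 1) = w := List.take_of_length_le (by omega)
  have hne : w ≠ List.replicate (w.length + 1) i := by
    intro h
    have := congrArg List.length h
    simp at this
  rw [h1]
  simp [hne]

lemma Tc_zero (i : Fin n) (f : List (Fin n) → K) (w : List (Fin n)) :
    Tc K n i 0 f w = f w := by
  unfold Tc
  rw [Finset.sum_range_succ']
  have h1 : ∀ k ∈ Finset.range w.length,
      algebraMap ℚ K (bq 0 (k+1)) * ((Lop K n i ^ (k+1)) f) w = 0 := by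
    intro k _
    rw [bq_zero_exp, map_zero, zero_mul]
  rw [Finset.sum_congr rfl h1]
  simp [bq_zero]

lemma TcI1 (i : Fin n) (e : ℤ) (f : List (Fin n) → K) (w : List (Fin n)) :
    Tc K n i (e + 1) f w
      = Tc K n i e (((1 : Module.End K (List (Fin n) → K)) + Lop K n i) f) w := by
  have hsplit : ∀ k : ℕ, ((Lop K n i ^ k) (((1 : Module.End K (List (Fin n) → K))
      + Lop K n i) f)) w = ((Lop K n i ^ k) f) w + ((Lop K n i ^ (k+1)) f) w := by
    intro k
    have h1 : ((1 : Module.End K (List (Fin n) → K)) + Lop K n i) f = f + Lop K n i f := rfl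
    rw [h1, map_add, Pi.add_apply]
    rw [pow_succ]
    rfl
  unfold Tc
  have hS : ∑ k ∈ Finset.range (w.length + 1), algebraMap ℚ K (bq e k)
        * ((Lop K n i ^ k) (((1 : Module.End K (List (Fin n) → K)) + Lop K n i) f)) w
      = ∑ k ∈ Finset.range (w.length + 1), algebraMap ℚ K (bq e k)
        * (((Lop K n i ^ k) f) w + ((Lop K n i ^ (k+1)) f) w) :=
    Finset.sum_congr rfl fun k _ => by rw [hsplit k]
  rw [hS]
  have hR : ∑ k ∈ Finset.range (w.length + 1), algebraMap ℚ K (bq e k)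
        * (((Lop K n i ^ k) f) w + ((Lop K n i ^ (k+1)) f) w)
      = (∑ k ∈ Finset.range (w.length + 1), algebraMap ℚ K (bq e k) * ((Lop K n i ^ k) f) w)
        + ∑ k ∈ Finset.range (w.length + 1),
            algebraMap ℚ K (bq e k) * ((Lop K n i ^ (k+1)) f) w := by
    rw [← Finset.sum_add_distrib]
    exact Finset.sum_congr rfl fun k _ => by ring
  rw [hR]
  rw [Finset.sum_range_succ' (fun k => algebraMap ℚ K (bq e k) * ((Lop K n i ^ k) f) w),
    Finset.sum_range_succ (fun k => algebraMap ℚ K (bq e k) * ((Lop K n i ^ (k+1)) f) w)]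
  rw [Finset.sum_range_succ' (fun k => algebraMap ℚ K (bq (e+1) k) * ((Lop K n i ^ k) f) w)]
  rw [Lpow_top, mul_zero, add_zero]
  have hterm : ∀ k ∈ Finset.range w.length,
      algebraMap ℚ K (bq (e+1) (k+1)) * ((Lop K n i ^ (k+1)) f) w
      = (algebraMap ℚ K (bq e (k+1)) * ((Lop K n i ^ (k+1)) f) w
          + algebraMap ℚ K (bq e k) * ((Lop K n i ^ (k+1)) f) w) := by
    intro k _
    rw [bq_pascal, map_add]
    ring
  rw [Finset.sum_congr rfl hterm, Finset.sum_add_distrib, bq_zero, bq_zero]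
  ring

lemma uE_zpow_apply (i : Fin n) :
    ∀ (e : ℤ) (f : List (Fin n) → K) (w : List (Fin n)),
      (((uE K n i ^ e : (Module.End K (List (Fin n) → K))ˣ)
          : Module.End K (List (Fin n) → K)) f) w = Tc K n i e f w := by
  intro e
  induction e using Int.induction_on with
  | zero =>
      intro f w
      rw [zpow_zero, Units.val_one, Tc_zero]
      rfl
  | succ e ih =>
      intro f w
      have hz : uE K n i ^ ((e : ℤ) + 1) = uE K n i ^ (e : ℤ) * uE K n i := by
        rw [zpow_add_one]
      rw [hz, Units.val_mul]
      have happ : ((((uE K n i ^ (e:ℤ)) : (Module.End K (List (Fin n) → K))ˣ)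
            : Module.End K (List (Fin n) → K))
          * ((uE K n i : (Module.End K (List (Fin n) → K))ˣ)
            : Module.End K (List (Fin n) → K))) f
          = (((uE K n i ^ (e:ℤ)) : (Module.End K (List (Fin n) → K))ˣ)
            : Module.End K (List (Fin n) → K))
            ((((1 : Module.End K (List (Fin n) → K)) + Lop K n i)) f) := rfl
      rw [happ, ih, ← TcI1]
  | pred e ih =>
      intro f w
      have hfg : f = (((uE K n i : (Module.End K (List (Fin n) → K))ˣ)
          : Module.End K (List (Fin n) → K)))
          ((((uE K n i)⁻¹ : (Module.End K (List (Fin n) → K))ˣ)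
          : Module.End K (List (Fin n) → K)) f) := by
        rw [← Module.End.mul_apply, ← Units.val_mul, mul_inv_cancel, Units.val_one]
        rfl
      set g : List (Fin n) → K := ((((uE K n i)⁻¹ : (Module.End K (List (Fin n) → K))ˣ)
          : Module.End K (List (Fin n) → K)) f) with hg
      have key : (((uE K n i ^ (-(e:ℤ) - 1)) : (Module.End K (List (Fin n) → K))ˣ)
            : Module.End K (List (Fin n) → K))
            ((((uE K n i) : (Module.End K (List (Fin n) → K))ˣ)
            : Module.End K (List (Fin n) → K)) g)
          = (((uE K n i ^ (-(e:ℤ))) : (Module.End K (List (Fin n) → K))ˣ)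
            : Module.End K (List (Fin n) → K)) g := by
        rw [← Module.End.mul_apply, ← Units.val_mul, ← zpow_add_one]
        norm_num
      have hTc : Tc K n i (-(e:ℤ)) g w = Tc K n i (-(e:ℤ) - 1)
          (((1 : Module.End K (List (Fin n) → K)) + Lop K n i) g) w := by
        have := TcI1 K n i (-(e:ℤ) - 1) g w
        rw [sub_add_cancel] at this
        exact this
      have hug : (((1 : Module.End K (List (Fin n) → K)) + Lop K n i) g) = f := by
        conv_rhs => rw [hfg]
        rfl
      calc (((uE K n i ^ (-(e:ℤ) - 1)) : (Module.End K (List (Fin n) → K))ˣ)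
            : Module.End K (List (Fin n) → K)) f w
          = (((uE K n i ^ (-(e:ℤ) - 1)) : (Module.End K (List (Fin n) → K))ˣ)
            : Module.End K (List (Fin n) → K))
            ((((uE K n i) : (Module.End K (List (Fin n) → K))ˣ)
            : Module.End K (List (Fin n) → K)) g) w := by rw [← hfg]
        _ = (((uE K n i ^ (-(e:ℤ))) : (Module.End K (List (Fin n) → K))ˣ)
            : Module.End K (List (Fin n) → K)) g w := by rw [key]
        _ = Tc K n i (-(e:ℤ)) g w := ih g w
        _ = Tc K n i (-(e:ℤ) - 1)
            (((1 : Module.End K (List (Fin n) → K)) + Lop K n i) g) w := hTc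
        _ = Tc K n i (-(e:ℤ) - 1) f w := by rw [hug]

end Tcsec
section Rep

variable (n : ℕ)

def gp (l : List (Fin n × ℤ)) : FreeGroup (Fin n) :=
  (l.map fun p => FreeGroup.of p.1 ^ p.2).prod

def frh : FreeGroup (Fin n) →* (Module.End K (List (Fin n) → K))ˣ :=
  FreeGroup.lift fun i => uE K n i

def e0 : List (Fin n) → K := fun w => if w = [] then 1 else 0

def cf (l : List (Fin n × ℤ)) (w : List (Fin n)) : K :=
  ((frh K n (gp n l) : Module.End K (List (Fin n) → K)) (e0 K n)) w

lemma cf_nil (w : List (Fin n)) : cf K n [] w = if w = [] then 1 else 0 := by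
  unfold cf gp
  rw [List.map_nil, List.prod_nil, map_one, Units.val_one]
  rfl

lemma cf_cons (i : Fin n) (e : ℤ) (l : List (Fin n × ℤ)) (w : List (Fin n)) :
    cf K n ((i, e) :: l) w = ∑ k ∈ Finset.range (w.length + 1),
      algebraMap ℚ K (bq e k)
        * (if w.take k = List.replicate k i then cf K n l (w.drop k) else 0) := by
  have hgp : gp n ((i, e) :: l) = FreeGroup.of i ^ e * gp n l := by
    unfold gp
    rw [List.map_cons, List.prod_cons]
  have h1 : cf K n ((i, e) :: l) w
      = (((frh K n (FreeGroup.of i) ^ e : (Module.End K (List (Fin n) → K))ˣ)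
          : Module.End K (List (Fin n) → K))
          ((frh K n (gp n l) : Module.End K (List (Fin n) → K)) (e0 K n))) w := by
    unfold cf
    rw [hgp, map_mul, map_zpow, Units.val_mul]
    rfl
  have h2 : frh K n (FreeGroup.of i) = uE K n i := FreeGroup.lift_apply_of
  rw [h1, h2, uE_zpow_apply]
  unfold Tc
  refine Finset.sum_congr rfl fun k _ => ?_
  rw [Lpow_apply]
  congr 1

end Rep

section Runs

variable (n : ℕ)

def rc : List (Fin n) → ℕ
  | [] => 0
  | [_] => 1
  | a :: b :: t => (if a = b then 0 else 1) + rc (b :: t)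

lemma rc_cons_le (a : Fin n) (t : List (Fin n)) : rc n (a :: t) ≤ 1 + rc n t := by
  cases t with
  | nil => simp [rc]
  | cons b t => simp only [rc]; split_ifs <;> omega

lemma rc_pos : ∀ (w : List (Fin n)), w ≠ [] → 1 ≤ rc n w := by
  intro w
  induction w with
  | nil => intro h; exact absurd rfl h
  | cons a t ih =>
      intro _
      cases t with
      | nil => simp [rc]
      | cons b s =>
          have := ih (by simp)
          simp only [rc]
          omega

lemma rc_repl_append (i : Fin n) :
    ∀ (k : ℕ), 1 ≤ k → ∀ (w : List (Fin n)),
      rc n (List.replicate k i ++ w) = rc n (i :: w) := by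
  intro k hk
  induction k, hk using Nat.le_induction with
  | base => intro w; rfl
  | succ k hk ih =>
      intro w
      have hsh : List.replicate (k+1) i ++ w = i :: (List.replicate k i ++ w) := by
        rw [List.replicate_succ, List.cons_append]
      obtain ⟨k', hk'⟩ : ∃ k', k = k' + 1 := ⟨k - 1, by omega⟩
      have hsh2 : List.replicate k i ++ w = i :: (List.replicate k' i ++ w) := by
        rw [hk', List.replicate_succ, List.cons_append]
      rw [hsh, hsh2]
      have : rc n (i :: i :: (List.replicate k' i ++ w)) = rc n (i :: (List.replicate k' i ++ w)) := by
        simp [rc]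
      rw [this, ← hsh2, ih]

lemma rc_cons_ne (i : Fin n) (w : List (Fin n)) (h : w = [] ∨ w.head? ≠ some i) :
    rc n (i :: w) = 1 + rc n w := by
  cases w with
  | nil => simp [rc]
  | cons b t =>
      rcases h with h | h
      · exact absurd h (by simp)
      · have hbi : ¬ (i = b) := by
          intro hh
          apply h
          simp [hh]
        simp [rc, hbi]

lemma rc_take_drop (i : Fin n) (k : ℕ) (w : List (Fin n))
    (h : w.take k = List.replicate k i) : rc n w ≤ 1 + rc n (w.drop k) := by
  rcases Nat.eq_zero_or_pos k with hk | hk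
  · subst hk; simp only [List.drop_zero]; omega
  · have hw : w = List.replicate k i ++ w.drop k := by
      conv_lhs => rw [← List.take_append_drop k w]
      rw [h]
    calc rc n w = rc n (List.replicate k i ++ w.drop k) := by rw [← hw]
      _ = rc n (i :: w.drop k) := rc_repl_append n i k hk _
      _ ≤ 1 + rc n (w.drop k) := rc_cons_le n i _

lemma rc_repl (i : Fin n) (k : ℕ) (hk : 1 ≤ k) : rc n (List.replicate k i) = 1 := by
  have := rc_repl_append n i k hk []
  rw [List.append_nil] at this
  rw [this]
  rfl

lemma cfG : ∀ (l : List (Fin n × ℤ)) (w : List (Fin n)),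
    w ≠ [] → l.length < rc n w → cf K n l w = 0 := by
  intro l
  induction l with
  | nil =>
      intro w hw _
      rw [cf_nil]
      simp [hw]
  | cons p l ih =>
      intro w hw hlen
      obtain ⟨i, e⟩ := p
      rw [cf_cons]
      apply Finset.sum_eq_zero
      intro k hk
      split_ifs with hcond
      · by_cases hdrop : w.drop k = []
        · exfalso
          have hk1 : 1 ≤ k := by
            rcases Nat.eq_zero_or_pos k with h0 | h0
            · subst h0; simp at hdrop; exact absurd hdrop hw
            · exact h0
          have hweq : w = List.replicate k i := by
            conv_lhs => rw [← List.take_append_drop k w]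
            rw [hcond, hdrop, List.append_nil]
          have : rc n w = 1 := by rw [hweq]; exact rc_repl n i k hk1
          rw [this] at hlen
          simp at hlen
        · have h2 : rc n w ≤ 1 + rc n (w.drop k) := rc_take_drop n i k w hcond
          have h3 : l.length < rc n (w.drop k) := by
            simp only [List.length_cons] at hlen
            omega
          rw [ih (w.drop k) hdrop h3, mul_zero]
      · rw [mul_zero]

end Runs
section BuildE

variable (n : ℕ)

def build : List (Fin n × ℕ) → List (Fin n)
  | [] => []
  | (i, a) :: σ => List.replicate a i ++ build σ

lemma build_cons (i : Fin n) (a : ℕ) (σ : List (Fin n × ℕ)) :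
    build n ((i, a) :: σ) = List.replicate a i ++ build n σ := rfl

lemma build_head (i : Fin n) (a : ℕ) (ha : 1 ≤ a) (σ : List (Fin n × ℕ)) :
    build n ((i, a) :: σ) = i :: (List.replicate (a - 1) i ++ build n σ) := by
  obtain ⟨a', rfl⟩ : ∃ a', a = a' + 1 := ⟨a - 1, by omega⟩
  rw [build_cons, List.replicate_succ, List.cons_append]
  simp

lemma build_head_cond (i₁ : Fin n) (a₁ : ℕ) (σ : List (Fin n × ℕ))
    (hch : List.IsChain (fun p q => p.1 ≠ q.1) ((i₁, a₁) :: σ))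
    (hpos : ∀ p ∈ σ, 1 ≤ p.2) :
    build n σ = [] ∨ (build n σ).head? ≠ some i₁ := by
  cases σ with
  | nil => left; rfl
  | cons q τ =>
      right
      obtain ⟨j, b⟩ := q
      have hb : 1 ≤ b := hpos _ (List.mem_cons_self)
      have hj : i₁ ≠ j := (List.isChain_cons_cons.mp hch).1
      rw [build_head n j b hb τ]
      simp only [List.head?_cons]
      intro hcon
      injection hcon with h
      exact hj h.symm

lemma rc_build : ∀ (σ : List (Fin n × ℕ)),
    List.IsChain (fun p q => p.1 ≠ q.1) σ → (∀ p ∈ σ, 1 ≤ p.2) →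
    rc n (build n σ) = σ.length := by
  intro σ
  induction σ with
  | nil => intro _ _; rfl
  | cons p σ ih =>
      intro hch hpos
      obtain ⟨i, a⟩ := p
      have ha : 1 ≤ a := hpos _ (List.mem_cons_self)
      have hposσ : ∀ q ∈ σ, 1 ≤ q.2 := fun q hq => hpos q (List.mem_cons_of_mem _ hq)
      have hchσ : List.IsChain (fun p q => p.1 ≠ q.1) σ := hch.tail
      rw [build_cons, rc_repl_append n i a ha,
        rc_cons_ne n i _ (build_head_cond n i a σ hch hposσ), ih hchσ hposσ]
      rw [List.length_cons]
      omega

lemma cfE : ∀ (σ : List (Fin n × ℕ)), List.IsChain (fun p q => p.1 ≠ q.1) σ →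
    (∀ p ∈ σ, 1 ≤ p.2) →
    ∀ (l : List (Fin n × ℤ)), l.length = σ.length →
    cf K n l (build n σ) = if l.map Prod.fst = σ.map Prod.fst
      then ((l.zip σ).map fun pq => algebraMap ℚ K (bq pq.1.2 pq.2.2)).prod
      else 0 := by
  intro σ
  induction σ with
  | nil =>
      intro _ _ l hl
      have : l = [] := List.eq_nil_of_length_eq_zero hl
      subst this
      simp [cf_nil, build]
  | cons p σ ih =>
      intro hch hpos l hl
      obtain ⟨i₁, a₁⟩ := p
      cases l with
      | nil => simp at hl
      | cons q l' =>
      obtain ⟨i', e'⟩ := q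
      have ha₁ : 1 ≤ a₁ := hpos _ (List.mem_cons_self)
      have hchσ : List.IsChain (fun p q => p.1 ≠ q.1) σ := hch.tail
      have hposσ : ∀ q ∈ σ, 1 ≤ q.2 := fun q hq => hpos q (List.mem_cons_of_mem _ hq)
      have hl' : l'.length = σ.length := by simpa using hl
      have hheadcond := build_head_cond n i₁ a₁ σ hch hposσ
      have hrcσ : rc n (build n σ) = σ.length := rc_build n σ hchσ hposσ
      have hrcw : rc n (build n ((i₁, a₁) :: σ)) = σ.length + 1 := by
        rw [rc_build n _ hch hpos]; simp
      have hwne : build n ((i₁, a₁) :: σ) ≠ [] := by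
        rw [build_head n i₁ a₁ ha₁ σ]
        simp
      rw [cf_cons]
      by_cases hii : i' = i₁
      · subst hii
        -- main case: single surviving term k = a₁
        have hmem : a₁ ∈ Finset.range ((build n ((i', a₁) :: σ)).length + 1) := by
          rw [Finset.mem_range, build_cons, List.length_append, List.length_replicate]
          omega
        rw [Finset.sum_eq_single a₁]
        · -- value of the surviving term
          have htk : (build n ((i', a₁) :: σ)).take a₁ = List.replicate a₁ i' := by
            rw [build_cons]
            exact List.take_left' (List.length_replicate)
          have hdr : (build n ((i', a₁) :: σ)).drop a₁ = build n σ := by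
            rw [build_cons]
            exact List.drop_left' (List.length_replicate)
          rw [htk, if_pos rfl, hdr, ih hchσ hposσ l' hl']
          simp only [List.map_cons, List.zip_cons_cons, List.prod_cons]
          by_cases hmap : l'.map Prod.fst = σ.map Prod.fst
          · rw [if_pos hmap, if_pos (by rw [hmap])]
          · rw [if_neg hmap, if_neg (by simp [hmap]), mul_zero]
        · -- other terms vanish
          intro k hk hkne
          rcases Nat.lt_or_ge k a₁ with hlt | hge
          · -- k < a₁
            split_ifs with hcond
            · have hdrop : (build n ((i', a₁) :: σ)).drop k
                  = List.replicate (a₁ - k) i' ++ build n σ := by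
                rw [build_cons, List.drop_append_of_le_length
                  (by rw [List.length_replicate]; omega), List.drop_replicate]
              have h1k : 1 ≤ a₁ - k := by omega
              have hrcdrop : rc n ((build n ((i', a₁) :: σ)).drop k) = σ.length + 1 := by
                rw [hdrop, rc_repl_append n i' _ h1k, rc_cons_ne n i' _ hheadcond, hrcσ]
                omega
              have hdropne : (build n ((i', a₁) :: σ)).drop k ≠ [] := by
                rw [hdrop]
                intro hcon
                have := congrArg List.length hcon
                rw [List.length_append, List.length_replicate] at this
                simp at this
                omega
              rw [cfG K n l' _ hdropne (by rw [hrcdrop]; omega), mul_zero]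
            · rw [mul_zero]
          · -- k > a₁, condition must fail
            have hgt : a₁ < k := by omega
            split_ifs with hcond
            · exfalso
              have htkk : (build n ((i', a₁) :: σ)).take k
                  = List.replicate a₁ i' ++ (build n σ).take (k - a₁) := by
                rw [build_cons, List.take_append, List.take_replicate,
                  List.length_replicate, min_eq_right (by omega)]
              have hrepl : List.replicate k i' = List.replicate a₁ i'
                  ++ List.replicate (k - a₁) i' := by
                rw [← List.replicate_add]
                congr 1
                omega
              rw [htkk, hrepl] at hcond
              have hcond' : (build n σ).take (k - a₁) = List.replicate (k - a₁) i' :=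
                List.append_cancel_left hcond
              obtain ⟨m, hm⟩ : ∃ m, k - a₁ = m + 1 := ⟨k - a₁ - 1, by omega⟩
              rcases hheadcond with hnil | hhd
              · rw [hnil] at hcond'
                have := congrArg List.length hcond'
                rw [List.length_replicate] at this
                simp at this
                omega
              · cases hbs : build n σ with
                | nil => rw [hbs] at hcond'; have := congrArg List.length hcond'
                         rw [List.length_replicate] at this; simp at this; omega
                | cons c rest =>
                    rw [hbs] at hcond'
                    rw [hm, List.take_succ_cons, List.replicate_succ] at hcond'
                    have hc : c = i' := (List.cons.injEq _ _ _ _).mp hcond' |>.1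
                    rw [hbs] at hhd
                    simp [hc] at hhd
            · exact mul_zero _
        · intro hmem'
          exact absurd hmem hmem'
      · -- first indices differ: everything vanishes
        rw [if_neg (by simp [hii])]
        apply Finset.sum_eq_zero
        intro k hk
        rcases Nat.eq_zero_or_pos k with hk0 | hk1
        · subst hk0
          simp only [List.take_zero, List.replicate_zero, List.drop_zero]
          rw [if_pos trivial, cfG K n l' _ hwne (by rw [hrcw]; omega), mul_zero]
        · split_ifs with hcond
          · exfalso
            obtain ⟨m, hm⟩ : ∃ m, k = m + 1 := ⟨k - 1, by omega⟩
            rw [build_head n i₁ a₁ ha₁ σ, hm, List.take_succ_cons, List.replicate_succ]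
              at hcond
            exact hii ((List.cons.injEq _ _ _ _).mp hcond).1.symm
          · rw [mul_zero]

end BuildE
section NF

variable (n : ℕ)

def Ok (l : List (Fin n × ℤ)) : Prop :=
  (∀ p ∈ l, p.2 ≠ 0) ∧ List.IsChain (fun p q => p.1 ≠ q.1) l

lemma gp_cons (p : Fin n × ℤ) (l : List (Fin n × ℤ)) :
    gp n (p :: l) = FreeGroup.of p.1 ^ p.2 * gp n l := by
  unfold gp
  rw [List.map_cons, List.prod_cons]

def smul1 (p : Fin n × ℤ) (l : List (Fin n × ℤ)) : List (Fin n × ℤ) :=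
  match l with
  | [] => [p]
  | q :: l' => if p.1 = q.1 then (if p.2 + q.2 = 0 then l' else (p.1, p.2 + q.2) :: l')
      else p :: q :: l'

lemma gp_smul1 (p : Fin n × ℤ) (l : List (Fin n × ℤ)) :
    gp n (smul1 n p l) = FreeGroup.of p.1 ^ p.2 * gp n l := by
  cases l with
  | nil => rw [show smul1 n p [] = [p] from rfl, gp_cons]
  | cons q l' =>
      obtain ⟨i, e⟩ := p
      obtain ⟨j, e'⟩ := q
      by_cases hij : i = j
      · subst hij
        by_cases hz : e + e' = 0
        · rw [show smul1 n (i,e) ((i,e')::l') = l' from by simp [smul1, hz]]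
          rw [gp_cons, ← mul_assoc, ← zpow_add, hz, zpow_zero, one_mul]
        · rw [show smul1 n (i,e) ((i,e')::l') = (i, e+e') :: l' from by simp [smul1, hz]]
          rw [gp_cons, gp_cons, ← mul_assoc, ← zpow_add]
      · rw [show smul1 n (i,e) ((j,e')::l') = (i,e) :: (j,e') :: l' from by simp [smul1, hij]]
        rw [gp_cons]

lemma Ok_smul1 (p : Fin n × ℤ) (l : List (Fin n × ℤ)) (hOk : Ok n l) (hp : p.2 ≠ 0) :
    Ok n (smul1 n p l) := by
  obtain ⟨hnz, hch⟩ := hOk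
  cases l with
  | nil =>
      constructor
      · intro q hq
        simp only [smul1, List.mem_singleton] at hq
        rw [hq]; exact hp
      · simp [smul1]
  | cons q l' =>
      obtain ⟨i, e⟩ := p
      obtain ⟨j, e'⟩ := q
      by_cases hij : i = j
      · subst hij
        by_cases hz : e + e' = 0
        · rw [show smul1 n (i,e) ((i,e')::l') = l' from by simp [smul1, hz]]
          exact ⟨fun q hq => hnz q (List.mem_cons_of_mem _ hq), hch.tail⟩
        · rw [show smul1 n (i,e) ((i,e')::l') = (i, e+e') :: l' from by simp [smul1, hz]]
          constructor
          · intro q hq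
            rcases List.mem_cons.mp hq with h | h
            · rw [h]; exact hz
            · exact hnz q (List.mem_cons_of_mem _ h)
          · cases l' with
            | nil => simp
            | cons r τ =>
                rw [List.isChain_cons_cons] at hch ⊢
                exact hch
      · rw [show smul1 n (i,e) ((j,e')::l') = (i,e) :: (j,e') :: l' from by simp [smul1, hij]]
        constructor
        · intro q hq
          rcases List.mem_cons.mp hq with h | h
          · rw [h]; exact hp
          · exact hnz q h
        · rw [List.isChain_cons_cons]
          exact ⟨hij, hch⟩

lemma exists_nf (g : FreeGroup (Fin n)) : ∃ l, Ok n l ∧ gp n l = g := by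
  have main : ∀ w : List (Fin n × Bool), ∃ l, Ok n l ∧ gp n l = FreeGroup.mk w := by
    intro w
    induction w with
    | nil =>
        refine ⟨[], ⟨by simp, List.isChain_nil⟩, ?_⟩
        rw [← FreeGroup.one_eq_mk]
        rfl
    | cons x w ih =>
        obtain ⟨l, hOk, hgp⟩ := ih
        obtain ⟨i, b⟩ := x
        refine ⟨smul1 n (i, if b then 1 else -1) l,
          Ok_smul1 n _ l hOk (by cases b <;> simp), ?_⟩
        rw [gp_smul1, hgp]
        have hmm : FreeGroup.mk ((i,b) :: w) = FreeGroup.mk [(i,b)] * FreeGroup.mk w := by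
          rw [FreeGroup.mul_mk]
          rfl
        rw [hmm]
        congr 1
        cases b
        · show FreeGroup.of i ^ (-1 : ℤ) = FreeGroup.mk [(i, false)]
          rw [zpow_neg_one]
          have h1 : FreeGroup.of i = FreeGroup.mk [(i, true)] := rfl
          rw [h1, FreeGroup.inv_mk]
          rfl
        · show FreeGroup.of i ^ (1 : ℤ) = FreeGroup.mk [(i, true)]
          rw [zpow_one]
          rfl
  obtain ⟨l, h1, h2⟩ := main (FreeGroup.toWord g)
  exact ⟨l, h1, by rw [h2, FreeGroup.mk_toWord]⟩

end NF
section Indep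

variable (n : ℕ)

def nf (g : FreeGroup (Fin n)) : List (Fin n × ℤ) := Classical.choose (exists_nf n g)

lemma nf_ok (g : FreeGroup (Fin n)) : Ok n (nf n g) := (Classical.choose_spec (exists_nf n g)).1

lemma nf_gp (g : FreeGroup (Fin n)) : gp n (nf n g) = g := (Classical.choose_spec (exists_nf n g)).2

lemma cf_word_nil : ∀ l : List (Fin n × ℤ), cf K n l [] = 1 := by
  intro l
  induction l with
  | nil => rw [cf_nil]; simp
  | cons p l ih =>
      obtain ⟨i, e⟩ := p
      rw [cf_cons]
      simp [bq_zero, ih]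

lemma fst_snd_ext : ∀ (l l' : List ((Fin n) × ℤ)), l.map Prod.fst = l'.map Prod.fst →
    l.map Prod.snd = l'.map Prod.snd → l = l' := by
  intro l
  induction l with
  | nil => intro l' h1 _; cases l' <;> simp_all
  | cons p l ih =>
      intro l' h1 h2
      cases l' with
      | nil => simp_all
      | cons q l'' =>
          simp only [List.map_cons, List.cons.injEq] at h1 h2
          have : l = l'' := ih l'' h1.2 h2.2
          have hpq : p = q := Prod.ext h1.1 h2.1
          rw [this, hpq]

lemma prodmatch : ∀ (l : List (Fin n × ℤ)) (sh : List (Fin n)) (a : List ℕ),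
    l.length = sh.length → sh.length = a.length →
    ((l.zip (sh.zip a)).map fun pq => algebraMap ℚ K (bq pq.1.2 pq.2.2))
      = (((l.map Prod.snd).zip a).map fun p => algebraMap ℚ K (bq p.1 p.2)) := by
  intro l
  induction l with
  | nil => intro sh a _ _; simp
  | cons p l ih =>
      intro sh a h1 h2
      cases sh with
      | nil => simp at h1
      | cons i sh' =>
          cases a with
          | nil => simp at h2
          | cons x a' =>
              simp only [List.zip_cons_cons, List.map_cons]
              rw [ih sh' a' (by simpa using h1) (by simpa using h2)]

lemma indep : ∀ (s : Finset (FreeGroup (Fin n))) (c : FreeGroup (Fin n) → K),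
    (∀ w : List (Fin n), ∑ g ∈ s, c g * cf K n (nf n g) w = 0) →
    ∀ g ∈ s, c g = 0 := by
  classical
  intro s
  induction s using Finset.strongInductionOn with
  | _ s ih =>
  intro c hrel g hg
  set k := s.sup fun g' => (nf n g').length with hk
  rcases Nat.eq_zero_or_pos k with hk0 | hk1
  · -- all elements are 1
    have hg1 : ∀ g' ∈ s, g' = 1 := by
      intro g' hg'
      have hle : (nf n g').length ≤ k := Finset.le_sup (f := fun g' => (nf n g').length) hg'
      have h0 : (nf n g') = [] := List.eq_nil_of_length_eq_zero (by omega)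
      have := nf_gp n g'
      rw [h0] at this
      rw [← this]
      rfl
    have hgg : g = 1 := hg1 g hg
    have hs : s = {1} := by
      apply Finset.Subset.antisymm
      · intro g' hg'
        simp [hg1 g' hg']
      · intro g' hg'
        simp only [Finset.mem_singleton] at hg'
        rw [hg', ← hgg]
        exact hg
    have hr := hrel []
    rw [hs, Finset.sum_singleton, cf_word_nil, mul_one] at hr
    rw [hgg]
    exact hr
  · -- main case
    obtain ⟨g₀, hg₀s, hg₀len⟩ : ∃ g₀ ∈ s, k = (nf n g₀).length :=
      Finset.exists_mem_eq_sup s ⟨g, hg⟩ _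
    set shp : List (Fin n) := (nf n g₀).map Prod.fst with hshp
    have hshplen : shp.length = k := by rw [hshp, List.length_map, hg₀len]
    set s₁ := s.filter (fun g' => (nf n g').map Prod.fst = shp) with hs₁
    have hs₁sub : s₁ ⊆ s := Finset.filter_subset _ _
    have hs₁len : ∀ g' ∈ s₁, (nf n g').length = k := by
      intro g' hg'
      have hfst := (Finset.mem_filter.mp hg').2
      have := congrArg List.length hfst
      rw [List.length_map] at this
      rw [this, hshplen]
    have hchshp : List.IsChain (fun x y => x ≠ y) shp := by
      rw [hshp, List.isChain_map]
      exact (nf_ok n g₀).2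
    -- coefficients on s₁ vanish
    have hkey : ∀ g' ∈ s₁, c g' = 0 := by
      set T : Finset (List ℤ) := s₁.image (fun g' => (nf n g').map Prod.snd) with hT
      set d : List ℤ → K := fun v =>
        ∑ g' ∈ s₁.filter (fun g' => (nf n g').map Prod.snd = v), c g' with hd
      have hTlen : ∀ v ∈ T, v.length = k := by
        intro v hv
        obtain ⟨g', hg', rfl⟩ := Finset.mem_image.mp hv
        rw [List.length_map]
        exact hs₁len g' hg'
      have hTnz : ∀ v ∈ T, ∀ x ∈ v, x ≠ (0:ℤ) := by
        intro v hv x hx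
        obtain ⟨g', hg', rfl⟩ := Finset.mem_image.mp hv
        obtain ⟨p, hp, rfl⟩ := List.mem_map.mp hx
        exact (nf_ok n g').1 p hp
      have hrel2 : ∀ a : List ℕ, a.length = k → (∀ x ∈ a, 1 ≤ x) →
          ∑ v ∈ T, d v * ((v.zip a).map fun p => algebraMap ℚ K (bq p.1 p.2)).prod = 0 := by
        intro a halen hapos
        set σt : List (Fin n × ℕ) := shp.zip a with hσt
        have hσtlen : σt.length = k := by
          rw [hσt, List.length_zip, hshplen, halen, min_self]
        have hσtfst : σt.map Prod.fst = shp := by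
          rw [hσt]
          exact List.map_fst_zip (by rw [hshplen, halen])
        have hσtch : List.IsChain (fun p q => p.1 ≠ q.1) σt := by
          have := List.isChain_map (Prod.fst (α := Fin n) (β := ℕ))
            (R := fun x y => x ≠ y) (l := σt)
          rw [hσtfst] at this
          exact this.mp hchshp
        have hσtpos : ∀ p ∈ σt, 1 ≤ p.2 := by
          intro p hp
          rcases p with ⟨i, x⟩
          exact hapos x (List.of_mem_zip hp).2
        have hrcσt : rc n (build n σt) = k := by
          rw [rc_build n σt hσtch hσtpos, hσtlen]
        have hbne : build n σt ≠ [] := by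
          intro hcon
          have : rc n (build n σt) = 0 := by rw [hcon]; rfl
          omega
        have hw := hrel (build n σt)
        -- split the sum
        rw [← Finset.sum_sdiff hs₁sub] at hw
        have hzero : ∑ g' ∈ s \ s₁, c g' * cf K n (nf n g') (build n σt) = 0 := by
          apply Finset.sum_eq_zero
          intro g' hg'
          have hgs : g' ∈ s := (Finset.mem_sdiff.mp hg').1
          have hgns₁ : g' ∉ s₁ := (Finset.mem_sdiff.mp hg').2
          have hle : (nf n g').length ≤ k := Finset.le_sup (f := fun g' => (nf n g').length) hgs
          rcases Nat.lt_or_ge (nf n g').length k with hlt | hge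
          · rw [cfG K n _ _ hbne (by omega), mul_zero]
          · have hlen' : (nf n g').length = σt.length := by omega
            have hfstne : (nf n g').map Prod.fst ≠ shp := by
              intro hcon
              exact hgns₁ (Finset.mem_filter.mpr ⟨hgs, hcon⟩)
            rw [cfE K n σt hσtch hσtpos _ hlen', if_neg (by rw [hσtfst]; exact hfstne),
              mul_zero]
        rw [hzero, zero_add] at hw
        -- rewrite the s₁ sum
        have hterm : ∀ g' ∈ s₁, c g' * cf K n (nf n g') (build n σt)
            = c g' * ((((nf n g').map Prod.snd).zip a).map
                fun p => algebraMap ℚ K (bq p.1 p.2)).prod := by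
          intro g' hg'
          have hlen' : (nf n g').length = σt.length := by rw [hσtlen]; exact hs₁len g' hg'
          have hfst : (nf n g').map Prod.fst = shp := (Finset.mem_filter.mp hg').2
          rw [cfE K n σt hσtch hσtpos _ hlen', if_pos (by rw [hσtfst]; exact hfst)]
          rw [hσt, prodmatch K n _ _ _ (by rw [← hfst, List.length_map]) (by rw [hshplen, halen])]
        rw [Finset.sum_congr rfl hterm] at hw
        -- fiberwise
        rw [← Finset.sum_fiberwise_of_maps_to (g := fun g' => (nf n g').map Prod.snd)
          (t := T) (fun g' hg' => Finset.mem_image_of_mem _ hg')] at hw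
        have hfib : ∀ v ∈ T, (∑ g' ∈ s₁.filter (fun g'' => (nf n g'').map Prod.snd = v),
            c g' * ((((nf n g').map Prod.snd).zip a).map
              (fun p => algebraMap ℚ K (bq p.1 p.2))).prod)
            = d v * ((v.zip a).map fun p => algebraMap ℚ K (bq p.1 p.2)).prod := by
          intro v hv
          have h1 : ∀ g' ∈ s₁.filter (fun g'' => (nf n g'').map Prod.snd = v),
              c g' * ((((nf n g').map Prod.snd).zip a).map
                (fun p => algebraMap ℚ K (bq p.1 p.2))).prod
              = c g' * ((v.zip a).map fun p => algebraMap ℚ K (bq p.1 p.2)).prod := by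
            intro g' hg'
            rw [(Finset.mem_filter.mp hg').2]
          rw [Finset.sum_congr rfl h1, ← Finset.sum_mul]
        rw [Finset.sum_congr rfl hfib] at hw
        exact hw
      have hmulti := multiD K k T hTlen hTnz d hrel2
      intro g' hg'
      have hvT : ((nf n g').map Prod.snd) ∈ T := Finset.mem_image_of_mem _ hg'
      have hdv : ∑ g'' ∈ s₁.filter (fun g'' => (nf n g'').map Prod.snd
          = (nf n g').map Prod.snd), c g'' = 0 := hmulti _ hvT
      have hfilter : s₁.filter (fun g'' => (nf n g'').map Prod.snd = (nf n g').map Prod.snd)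
          = {g'} := by
        apply Finset.Subset.antisymm
        · intro g'' hg''
          have h1 : g'' ∈ s₁ := (Finset.mem_filter.mp hg'').1
          have h2 : (nf n g'').map Prod.snd = (nf n g').map Prod.snd :=
            (Finset.mem_filter.mp hg'').2
          have h3 : (nf n g'').map Prod.fst = (nf n g').map Prod.fst := by
            rw [(Finset.mem_filter.mp h1).2, (Finset.mem_filter.mp hg').2]
          have h4 : nf n g'' = nf n g' := fst_snd_ext n _ _ h3 h2
          have h5 : g'' = g' := by
            rw [← nf_gp n g'', ← nf_gp n g', h4]
          simp [h5]
        · intro g'' hg''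
          simp only [Finset.mem_singleton] at hg''
          subst hg''
          exact Finset.mem_filter.mpr ⟨hg', rfl⟩
      rw [hfilter, Finset.sum_singleton] at hdv
      exact hdv
    -- finish by strong induction on s \ s₁
    by_cases hgs₁ : g ∈ s₁
    · exact hkey g hgs₁
    · have hg₀s₁ : g₀ ∈ s₁ := Finset.mem_filter.mpr ⟨hg₀s, rfl⟩
      have hss : s \ s₁ ⊂ s := by
        apply Finset.sdiff_ssubset hs₁sub ⟨g₀, hg₀s₁⟩
      have hrel' : ∀ w : List (Fin n), ∑ g' ∈ s \ s₁, c g' * cf K n (nf n g') w = 0 := by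
        intro w
        have := hrel w
        rw [← Finset.sum_sdiff hs₁sub] at this
        have h0 : ∑ g' ∈ s₁, c g' * cf K n (nf n g') w = 0 :=
          Finset.sum_eq_zero fun g' hg' => by rw [hkey g' hg', zero_mul]
        rw [h0, add_zero] at this
        exact this
      exact ih (s \ s₁) hss c hrel' g (Finset.mem_sdiff.mpr ⟨hg, hgs₁⟩)

end Indep
section Final

variable (n : ℕ)

def Phi : MonoidAlgebra K (FreeGroup (Fin n)) →ₐ[K] Module.End K (List (Fin n) → K) :=
  MonoidAlgebra.lift K _ (FreeGroup (Fin n))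
    ((Units.coeHom (Module.End K (List (Fin n) → K))).comp (frh K n))

def Vdeg (j : ℕ) : Submodule K (List (Fin n) → K) where
  carrier := {f | ∀ w : List (Fin n), w.length < j → f w = 0}
  add_mem' := fun hf hg w hw => by
    rw [Pi.add_apply, hf w hw, hg w hw, add_zero]
  zero_mem' := fun w hw => rfl
  smul_mem' := fun c f hf w hw => by
    rw [Pi.smul_apply, hf w hw, smul_zero]

lemma Vdeg_mem {j : ℕ} {f : List (Fin n) → K} :
    f ∈ Vdeg K n j ↔ ∀ w : List (Fin n), w.length < j → f w = 0 := Iff.rfl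

def Ndeg (j : ℕ) : Submodule K (Module.End K (List (Fin n) → K)) where
  carrier := {T | ∀ (m : ℕ), ∀ f ∈ Vdeg K n m, T f ∈ Vdeg K n (m + j)}
  add_mem' := fun {T S} hT hS m f hf => by
    rw [LinearMap.add_apply]
    exact add_mem (hT m f hf) (hS m f hf)
  zero_mem' := fun m f hf => by
    rw [LinearMap.zero_apply]
    exact zero_mem _
  smul_mem' := fun c T hT m f hf => by
    rw [LinearMap.smul_apply]
    exact Submodule.smul_mem _ c (hT m f hf)

lemma Ndeg_mem {j : ℕ} {T : Module.End K (List (Fin n) → K)} :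
    T ∈ Ndeg K n j ↔ ∀ (m : ℕ), ∀ f ∈ Vdeg K n m, T f ∈ Vdeg K n (m + j) := Iff.rfl

lemma Vdeg_anti {j j' : ℕ} (h : j ≤ j') : Vdeg K n j' ≤ Vdeg K n j := by
  intro f hf w hw
  exact hf w (by omega)

lemma Ndeg_anti {j j' : ℕ} (h : j ≤ j') : Ndeg K n j' ≤ Ndeg K n j := by
  intro T hT m f hf
  exact Vdeg_anti K n (by omega) (hT m f hf)

lemma Ndeg_mul {a b : ℕ} {T S : Module.End K (List (Fin n) → K)}
    (hT : T ∈ Ndeg K n a) (hS : S ∈ Ndeg K n b) : T * S ∈ Ndeg K n (a + b) := by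
  intro m f hf
  rw [Module.End.mul_apply]
  have h1 := hT (m + b) _ (hS m f hf)
  exact Vdeg_anti K n (by omega) h1

lemma Lop_mem_Ndeg (i : Fin n) : Lop K n i ∈ Ndeg K n 1 := by
  intro m f hf w hw
  cases w with
  | nil => rfl
  | cons a t =>
      show (if a = i then f t else 0) = 0
      split_ifs
      · exact hf t (by simp at hw; omega)
      · rfl

lemma Mfun_vanish (i : Fin n) (m : ℕ) (f : List (Fin n) → K) (hf : f ∈ Vdeg K n m) :
    ∀ t : List (Fin n), t.length < m → Mfun K n i f t = 0 := by
  intro t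
  induction t with
  | nil => intro h; exact hf [] h
  | cons a t ih =>
      intro h
      show f (a :: t) - (if a = i then Mfun K n i f t else 0) = 0
      rw [hf _ h, ih (by simp at h ⊢; omega)]
      simp

lemma Mop_sub_one_mem (i : Fin n) : Mop K n i - 1 ∈ Ndeg K n 1 := by
  intro m f hf w hw
  rw [LinearMap.sub_apply, Pi.sub_apply, Module.End.one_apply]
  have hlen : w.length < m + 1 := hw
  cases w with
  | nil =>
      show Mfun K n i f [] - f [] = 0
      show f [] - f [] = 0
      ring
  | cons a t =>
      show (f (a :: t) - (if a = i then Mfun K n i f t else 0)) - f (a :: t) = 0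
      rw [Mfun_vanish K n i m f hf t (by simp at hlen; omega)]
      simp

lemma frh_sub_one (g : FreeGroup (Fin n)) :
    ((frh K n g : Module.End K (List (Fin n) → K)) - 1) ∈ Ndeg K n 1 := by
  induction g using FreeGroup.induction_on with
  | C1 =>
      rw [map_one, Units.val_one, sub_self]
      exact zero_mem _
  | of i =>
      have h1 : frh K n (FreeGroup.of i) = uE K n i := FreeGroup.lift_apply_of
      rw [h1]
      have h2 : ((uE K n i : (Module.End K (List (Fin n) → K))ˣ)
          : Module.End K (List (Fin n) → K)) - 1 = Lop K n i := by
        show (1 + Lop K n i) - 1 = Lop K n i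
        abel
      rw [h2]
      exact Lop_mem_Ndeg K n i
  | inv_of i _ =>
      have h0 : frh K n (FreeGroup.of i) = uE K n i := FreeGroup.lift_apply_of
      have h1 : frh K n (FreeGroup.of i)⁻¹ = (uE K n i)⁻¹ := by
        rw [map_inv, h0]
      rw [h1]
      have h2 : (((uE K n i)⁻¹ : (Module.End K (List (Fin n) → K))ˣ)
          : Module.End K (List (Fin n) → K)) - 1 = Mop K n i - 1 := rfl
      rw [h2]
      exact Mop_sub_one_mem K n i
  | mul g h hg hh =>
      have key : (frh K n (g * h) : Module.End K (List (Fin n) → K)) - 1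
          = ((frh K n g : Module.End K (List (Fin n) → K)) - 1)
              * ((frh K n h : Module.End K (List (Fin n) → K)) - 1)
            + ((frh K n g : Module.End K (List (Fin n) → K)) - 1)
            + ((frh K n h : Module.End K (List (Fin n) → K)) - 1) := by
        rw [map_mul, Units.val_mul]
        set a : Module.End K (List (Fin n) → K) := (frh K n g : Module.End K (List (Fin n) → K))
        set b : Module.End K (List (Fin n) → K) := (frh K n h : Module.End K (List (Fin n) → K))
        have h3 : (a - 1) * (b - 1) = a * b - a - b + 1 := by
          rw [sub_mul, mul_sub, mul_sub, one_mul, mul_one]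
          abel
        rw [h3]
        abel
      rw [key]
      refine add_mem (add_mem ?_ hg) hh
      exact Ndeg_anti K n (by omega) (Ndeg_mul K n hg hh)

end Final
end AugAux
set_option maxHeartbeats 1000000 in
set_option synthInstance.maxHeartbeats 200000 in
/-- for a free group of finite rank, the intersection of the powers of
the augmentation ideal of the group ring over K ⊇ ℚ is zero. -/
theorem augmentation_powers_inf_eq_bot {K : Type*} [CommRing K] [Algebra ℚ K] (n : ℕ)
    (aug : MonoidAlgebra K (FreeGroup (Fin n)) →ₐ[K] K)
    (haug : ∀ g : FreeGroup (Fin n), aug (MonoidAlgebra.of K (FreeGroup (Fin n)) g) = 1)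
    (I : Submodule K (MonoidAlgebra K (FreeGroup (Fin n))))
    (hI : I = LinearMap.ker aug.toLinearMap)
    (P : ℕ → Submodule K (MonoidAlgebra K (FreeGroup (Fin n))))
    (hP0 : P 0 = ⊤) (hPs : ∀ j : ℕ, P (j + 1) = I ^ (j + 1)) :
    ⨅ j : ℕ, P j = ⊥ := by
  classical
  rw [eq_bot_iff]
  intro x hx
  have hxj : ∀ j : ℕ, x ∈ P j := (Submodule.mem_iInf _).mp hx
  have haugI : ∀ y ∈ I, aug y = 0 := by
    intro y hy
    rw [hI] at hy
    exact LinearMap.mem_ker.mp hy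
  have hPhiOf : ∀ g : FreeGroup (Fin n), Phi K n (MonoidAlgebra.of K (FreeGroup (Fin n)) g)
      = (frh K n g : Module.End K (List (Fin n) → K)) := by
    intro g
    unfold Phi
    rw [MonoidAlgebra.lift_of]
    rfl
  have hP1 : ∀ y : MonoidAlgebra K (FreeGroup (Fin n)),
      Phi K n y - algebraMap K (Module.End K (List (Fin n) → K)) (aug y) ∈ Ndeg K n 1 := by
    intro y
    induction y using MonoidAlgebra.induction_on with
    | of g =>
        rw [hPhiOf, haug, map_one]
        exact frh_sub_one K n g
    | add f g hf hg =>
        have h1 := add_mem hf hg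
        have h2 : (Phi K n f - algebraMap K (Module.End K (List (Fin n) → K)) (aug f))
            + (Phi K n g - algebraMap K (Module.End K (List (Fin n) → K)) (aug g))
            = Phi K n (f + g) - algebraMap K (Module.End K (List (Fin n) → K)) (aug (f+g)) := by
          rw [show Phi K n (f + g) = Phi K n f + Phi K n g from map_add _ f g,
            show aug (f + g) = aug f + aug g from map_add _ f g,
            show algebraMap K (Module.End K (List (Fin n) → K)) (aug f + aug g)
              = algebraMap K (Module.End K (List (Fin n) → K)) (aug f)
                + algebraMap K (Module.End K (List (Fin n) → K)) (aug g) from map_add _ _ _]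
          abel
        rwa [h2] at h1
    | smul r f hf =>
        have h2 : Phi K n (r • f) - algebraMap K (Module.End K (List (Fin n) → K)) (aug (r • f))
            = r • (Phi K n f - algebraMap K (Module.End K (List (Fin n) → K)) (aug f)) := by
          rw [map_smul, map_smul, smul_eq_mul, map_mul, ← Algebra.smul_def, smul_sub]
        rw [h2]
        exact Submodule.smul_mem _ r hf
  have hIN : ∀ y ∈ I, Phi K n y ∈ Ndeg K n 1 := by
    intro y hy
    have h1 := hP1 y
    rwa [haugI y hy, map_zero, sub_zero] at h1
  have hPow : ∀ (j : ℕ) (y : MonoidAlgebra K (FreeGroup (Fin n))),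
      y ∈ I ^ (j + 1) → Phi K n y ∈ Ndeg K n (j + 1) := by
    intro j
    induction j with
    | zero =>
        intro y hy
        rw [pow_one] at hy
        exact hIN y hy
    | succ j ih =>
        intro y hy
        rw [pow_succ] at hy
        refine Submodule.mul_induction_on hy ?_ ?_
        · intro a ha b hb
          rw [map_mul]
          exact Ndeg_mul K n (ih a ha) (hIN b hb)
        · intro a b ha hb
          rw [map_add]
          exact add_mem ha hb
  have he0 : e0 K n ∈ Vdeg K n 0 := fun w hw => absurd hw (by omega)
  have hEv : ∀ w : List (Fin n), (Phi K n x) (e0 K n) w = 0 := by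
    intro w
    have hx' : x ∈ I ^ (w.length + 1) := by
      rw [← hPs w.length]
      exact hxj (w.length + 1)
    have h2 := hPow w.length x hx' 0 _ he0
    exact h2 w (by omega)
  have hsum : ∀ w : List (Fin n), ∑ g ∈ x.coeff.support, x.coeff g * cf K n (nf n g) w = 0 := by
    intro w
    have h1 : Phi K n x = ∑ g ∈ x.coeff.support,
        x.coeff g • ((frh K n g : Module.End K (List (Fin n) → K))) := by
      unfold Phi
      rw [MonoidAlgebra.lift_apply]
      rfl
    have h2 : ∀ g : FreeGroup (Fin n),
        cf K n (nf n g) w = ((frh K n g : Module.End K (List (Fin n) → K)) (e0 K n)) w := by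
      intro g
      unfold cf
      rw [nf_gp]
    have h3 : (Phi K n x) (e0 K n) w = ∑ g ∈ x.coeff.support,
        x.coeff g * (((frh K n g : Module.End K (List (Fin n) → K))) (e0 K n)) w := by
      rw [h1, LinearMap.sum_apply, Finset.sum_apply]
      refine Finset.sum_congr rfl fun g _ => ?_
      rw [LinearMap.smul_apply, Pi.smul_apply, smul_eq_mul]
    rw [Finset.sum_congr rfl fun g _ => by rw [h2 g]]
    rw [← h3, hEv w]
  have hx0 : ∀ g ∈ x.coeff.support, x.coeff g = 0 := indep K n x.coeff.support (fun g => x.coeff g) hsum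
  have hxz : x = 0 := by
    apply MonoidAlgebra.ext
    apply Finsupp.ext
    intro g
    by_cases hg : g ∈ x.coeff.support
    · exact hx0 g hg
    · exact Finsupp.notMem_support_iff.mp hg
  rw [hxz]
  exact Submodule.zero_mem ⊥
end
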